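/- For every integer k ≥ 1, the implicit Burgers profile U_k satisfies the self-similar Burgers profile equation with parameter λ = 1/(2k), i.e. -(1/(2k)) U_k(y) + ((1+1/(2k)) y + U_k(y)) U_k'(y) = 0 for every y ∈ ℝ. -/

import Mathlib

/-! `U_k` is the inverse of the strictly decreasing map `u ↦ -(u + u^(2k+1))`, so it is continuous
and the inverse function theorem gives `U_k' = -1 / (1 + (2k+1) U_k^(2k))`. Substituting
`y = -(U_k + U_k^(2k+1))`, the profile equation with `λ = 1/(2k)` reduces to `(1 + λ) / λ = 2k + 1`. -/

open Filter

section OddPowerProfile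

variable {n : ℕ}

theorem StrictMono.continuous_of_rightInverse {α β : Type*} [LinearOrder α] [TopologicalSpace α]
    [OrderTopology α] [DenselyOrdered α] [LinearOrder β] [TopologicalSpace β] [OrderTopology β]
    {f : α → β} {g : β → α} (hf : StrictMono f)
    (hfg : Function.RightInverse g f) : Continuous g :=
  Monotone.continuous_of_surjective (fun a b hab => hf.le_iff_le.mp (by rwa [hfg a, hfg b]))
    fun x => ⟨f x, hf.injective (hfg (f x))⟩

theorem strictMono_add_pow_of_odd (hn : Odd n) : StrictMono fun u : ℝ => u + u ^ n :=
  strictMono_id.add hn.strictMono_pow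

theorem continuous_of_add_pow_eq_neg (hn : Odd n) {U : ℝ → ℝ}
    (hU : ∀ y, U y + U y ^ n = -y) : Continuous U := by
  have hcont : Continuous fun y => U (-y) :=
    (strictMono_add_pow_of_odd hn).continuous_of_rightInverse fun y => by simpa using hU (-y)
  simpa [Function.comp_def] using hcont.comp continuous_neg

theorem hasDerivAt_of_add_pow_eq_neg (hn : Odd n) {U : ℝ → ℝ}
    (hU : ∀ y, U y + U y ^ n = -y) (y : ℝ) :
    HasDerivAt U (-(1 + n * U y ^ (n - 1)))⁻¹ y := by
  have hpos : 0 < 1 + n * U y ^ (n - 1) := by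
    have hpow := (Nat.Odd.sub_odd hn odd_one).pow_nonneg (U y)
    positivity
  refine HasDerivAt.of_local_left_inverse (continuous_of_add_pow_eq_neg hn hU).continuousAt
    ((hasDerivAt_id _).add (hasDerivAt_pow n _)).neg (neg_ne_zero.mpr hpos.ne') ?_
  filter_upwards with z
  simp [hU z]

end OddPowerProfile

theorem selfSimilar_eq_of_add_pow_eq_neg {k : ℕ} (hk : k ≠ 0) {u y : ℝ}
    (hy : u + u ^ (2 * k + 1) = -y) :
    -(1 / (2 * (k : ℝ))) * u +
      ((1 + 1 / (2 * (k : ℝ))) * y + u) * (-(1 + (2 * k + 1 : ℕ) * u ^ (2 * k)))⁻¹ = 0 := by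
  obtain rfl : y = -(u + u ^ (2 * k + 1)) := by linarith
  have hpow := (even_two_mul k).pow_nonneg u
  have hne : 1 + ((2 * k + 1 : ℕ) : ℝ) * u ^ (2 * k) ≠ 0 := by positivity
  field_simp
  push_cast
  ring

/-- The implicit Burgers profile `U_k` (the function with
`U_k(y) + U_k(y)^(2k+1) = -y`) satisfies the self-similar Burgers profile equation with
parameter `λ = 1/(2k)`. -/
theorem implicit_burgers_profile_solves_selfSimilar_eq
    (k : ℕ) (hk : 1 ≤ k) (U : ℝ → ℝ)
    (hU : ∀ y : ℝ, U y + U y ^ (2 * k + 1) = -y) :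
    ∀ y : ℝ,
      -(1 / (2 * (k : ℝ))) * U y +
        ((1 + 1 / (2 * (k : ℝ))) * y + U y) * deriv U y = 0 := by
  intro y
  rw [(hasDerivAt_of_add_pow_eq_neg ⟨k, by ring⟩ hU y).deriv, Nat.add_sub_cancel]
  exact selfSimilar_eq_of_add_pow_eq_neg (by omega) (hU y)
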